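/- Let s ≥ 2. Assume μ(τ) ≠ 0 and that τ satisfies exponential large deviation bounds: for each ε > 0 there exist C, δ > 0 with μ(‖τ_N/N − μ(τ)‖ ≥ ε) ≤ C e^{−δN} for all N ≥ 1. Let A₁, …, A_s : X → ℝ be bounded measurable with |μ(∏_{j=1}^s A_j ∘ f^{N_j}) − ∏_{j=1}^s μ(A_j)| ≤ C_f e^{−c_f min_{i≠j}|N_i−N_j|} for all integers N₁ ≤ … ≤ N_s, and let B₁, …, B_s : Y → ℝ be bounded measurable with |ν(∏_{j=1}^s B_j ∘ G_{t_j}) − ∏_{j=1}^s ν(B_j)| ≤ C_G e^{−κ min_{i≠j}‖t_i−t_j‖} for all t₁, …, t_s ∈ ℝ^d. Then, with Φ_j(x, y) = A_j(x)B_j(y), there exist C', c' > 0 such that for all integers N₁ ≤ … ≤ N_s, |∫ ∏_{j=1}^s Φ_j ∘ F^{N_j} dζ − ∏_{j=1}^s ∫ Φ_j dζ| ≤ C' e^{−c' min_{i≠j}|N_i − N_j|}. -/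

import Mathlib

/-!
Since `F^N (x, y) = (f^N x, G_{τ_N x} y)`, integrating first over `y` turns the correlation of
the `Φ_j ∘ F^{N_j}` into `∫ g φ dμ` with `g = ∏ A_j ∘ f^{N_j}` and
`φ(x) = ν(∏ B_j ∘ G_{τ_{N_j} x})`. As `τ_{N_j} - τ_{N_i} = τ_{N_j - N_i} ∘ f^{N_i}`, large
deviations for `τ` show that off a set of measure `O(e^{-δ m})` the times `τ_{N_j} x` are
`‖μ(τ)‖ m / 2` apart, and there mixing of `G` makes `φ(x)` exponentially close to `∏ ν(B_j)`.
What is left, `(μ(g) - ∏ μ(A_j)) ∏ ν(B_j)`, is controlled by mixing of `f`.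
-/

open MeasureTheory Filter Topology

noncomputable section

/-- Birkhoff sums `τ_N(x) = ∑_{n<N} τ(f^n x)` of an `ℝ^d`-valued observable. -/
def birkhoff {X : Type*} {d : ℕ} (f : X → X)
    (τ : X → EuclideanSpace ℝ (Fin d)) (N : ℕ) (x : X) : EuclideanSpace ℝ (Fin d) :=
  ∑ n ∈ Finset.range N, τ (f^[n] x)

/-- The generalized `T,T⁻¹` (skew product) map `F(x,y) = (f x, G_{τ(x)} y)`. -/
def skew {X Y : Type*} {d : ℕ} (f : X → X) (G : EuclideanSpace ℝ (Fin d) → Y → Y)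
    (τ : X → EuclideanSpace ℝ (Fin d)) : X × Y → X × Y :=
  fun q => (f q.1, G (τ q.1) q.2)

open Finset

section Birkhoff

variable {X : Type*} {d : ℕ} (f : X → X) (τ : X → EuclideanSpace ℝ (Fin d))

lemma birkhoff_succ (N : ℕ) (x : X) :
    birkhoff f τ (N + 1) x = birkhoff f τ N x + τ (f^[N] x) :=
  sum_range_succ _ _

lemma birkhoff_add (a b : ℕ) (x : X) :
    birkhoff f τ (a + b) x = birkhoff f τ a x + birkhoff f τ b (f^[a] x) := by
  simp only [birkhoff, sum_range_add, ← Function.iterate_add_apply, add_comm _ a]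

lemma measurable_birkhoff [MeasurableSpace X] (hf : Measurable f) (hτ : Measurable τ) (N : ℕ) :
    Measurable (birkhoff f τ N) :=
  Finset.measurable_sum _ fun n _ => hτ.comp (hf.iterate n)

lemma skew_iterate {Y : Type*} (G : EuclideanSpace ℝ (Fin d) → Y → Y) (hG0 : G 0 = id)
    (hGadd : ∀ t s, G (t + s) = G t ∘ G s) (N : ℕ) (q : X × Y) :
    (skew f G τ)^[N] q = (f^[N] q.1, G (birkhoff f τ N q.1) q.2) := by
  induction N with
  | zero => simp [birkhoff, hG0]
  | succ N ih =>
    simp only [Function.iterate_succ_apply', ih, birkhoff_succ, add_comm (birkhoff f τ N q.1),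
      hGadd]
    rfl

end Birkhoff

def ExpDecay (b : ℕ → ℝ) : Prop :=
  ∃ C : ℝ, 0 < C ∧ ∃ c : ℝ, 0 < c ∧ ∀ m : ℕ, b m ≤ C * Real.exp (-c * m)

namespace ExpDecay

lemma exp {C c : ℝ} (hc : 0 < c) : ExpDecay fun m => C * Real.exp (-c * m) :=
  ⟨max C 1, by positivity, c, hc, fun _ =>
    mul_le_mul_of_nonneg_right (le_max_left C 1) (Real.exp_pos _).le⟩

lemma const_mul {b : ℕ → ℝ} (hb : ExpDecay b) {a : ℝ} (ha : 0 ≤ a) :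
    ExpDecay fun m => a * b m := by
  obtain ⟨C, -, c, hc, hbC⟩ := hb
  obtain ⟨C', hC', c', hc', hexp⟩ := exp (C := a * C) hc
  refine ⟨C', hC', c', hc', fun m => ?_⟩
  calc a * b m ≤ a * (C * Real.exp (-c * m)) := mul_le_mul_of_nonneg_left (hbC m) ha
    _ ≤ C' * Real.exp (-c' * m) := (mul_assoc a C _).symm.trans_le (hexp m)

lemma add {b b' : ℕ → ℝ} (hb : ExpDecay b) (hb' : ExpDecay b') :
    ExpDecay fun m => b m + b' m := by
  obtain ⟨C, hC, c, hc, hbC⟩ := hb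
  obtain ⟨C', hC', c', hc', hbC'⟩ := hb'
  refine ⟨C + C', by positivity, min c c', lt_min hc hc', fun m => ?_⟩
  calc b m + b' m ≤ C * Real.exp (-c * m) + C' * Real.exp (-c' * m) :=
        add_le_add (hbC m) (hbC' m)
    _ ≤ C * Real.exp (-min c c' * m) + C' * Real.exp (-min c c' * m) := by
      gcongr
      exacts [min_le_left c c', min_le_right c c']
    _ = (C + C') * Real.exp (-min c c' * m) := by ring

end ExpDecay

lemma abs_prod_le_prod_of_abs_le {ι α : Type*} [Fintype ι] {A : ι → α → ℝ} {a : ι → ℝ}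
    (ha : ∀ j x, |A j x| ≤ a j) (w : ι → α) : |∏ j, A j (w j)| ≤ ∏ j, a j := by
  rw [abs_prod]
  exact prod_le_prod (fun j _ => abs_nonneg _) fun j _ => ha j (w j)

section Integrals

variable {X : Type*} [MeasurableSpace X] {μ : Measure X} [IsProbabilityMeasure μ]

lemma abs_integral_le_of_abs_le {h : X → ℝ} {M : ℝ} (hM : ∀ x, |h x| ≤ M) :
    |∫ x, h x ∂μ| ≤ M := by
  simpa using norm_integral_le_of_norm_le_const (μ := μ)
    (ae_of_all _ fun x => (Real.norm_eq_abs _).trans_le (hM x))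

lemma abs_integral_le_add_measureReal {h : X → ℝ} {E : Set X} (hE : MeasurableSet E)
    {ε b : ℝ} (hε : 0 ≤ ε) (hb : ∀ x, |h x| ≤ b) (hεE : ∀ x ∉ E, |h x| ≤ ε) :
    |∫ x, h x ∂μ| ≤ ε + b * μ.real E := by
  have hind : Integrable (fun x => b * E.indicator 1 x) μ :=
    ((integrable_indicator_iff hE).2 (integrable_const 1).integrableOn).const_mul b
  have hbound : Integrable (fun x => ε + b * E.indicator 1 x) μ := (integrable_const ε).add hind
  have hle : ∀ x, ‖h x‖ ≤ ε + b * E.indicator 1 x := by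
    intro x
    by_cases hx : x ∈ E
    · simpa [hx] using (hb x).trans (le_add_of_nonneg_left hε)
    · simpa [hx] using hεE x hx
  calc |∫ x, h x ∂μ| = ‖∫ x, h x ∂μ‖ := (Real.norm_eq_abs _).symm
    _ ≤ ∫ x, ε + b * E.indicator 1 x ∂μ := norm_integral_le_of_norm_le hbound (ae_of_all _ hle)
    _ = ε + b * μ.real E := by
      rw [integral_add (integrable_const ε) hind, integral_const, integral_const_mul,
        integral_indicator_one hE]
      simp

lemma abs_integral_mul_sub_mul_le {g φ : X → ℝ} (hg : AEStronglyMeasurable g μ)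
    (hφ : AEStronglyMeasurable φ μ) {E : Set X} (hE : MeasurableSet E) {a b ε p q : ℝ}
    (hε : 0 ≤ ε) (hga : ∀ x, |g x| ≤ a) (hφb : ∀ x, |φ x - q| ≤ b)
    (hφε : ∀ x ∉ E, |φ x - q| ≤ ε) :
    |∫ x, g x * φ x ∂μ - p * q| ≤ |q| * |∫ x, g x ∂μ - p| + a * (ε + b * μ.real E) := by
  obtain ⟨x₀⟩ := nonempty_of_isProbabilityMeasure μ
  have ha : 0 ≤ a := (abs_nonneg _).trans (hga x₀)
  have hgi : Integrable g μ :=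
    .of_bound hg a (ae_of_all _ fun x => (Real.norm_eq_abs _).trans_le (hga x))
  have hdev : ∀ x, |g x * (φ x - q)| ≤ a * b := fun x => by
    rw [abs_mul]; exact mul_le_mul (hga x) (hφb x) (abs_nonneg _) ha
  have hdevi : Integrable (fun x => g x * (φ x - q)) μ :=
    .of_bound (hg.mul (hφ.sub aestronglyMeasurable_const)) (a * b)
      (ae_of_all _ fun x => (Real.norm_eq_abs _).trans_le (hdev x))
  have hsplit : ∫ x, g x * φ x ∂μ - p * q
      = ∫ x, g x * (φ x - q) ∂μ + q * (∫ x, g x ∂μ - p) := by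
    have : ∫ x, g x * φ x ∂μ = ∫ x, g x * (φ x - q) ∂μ + q * ∫ x, g x ∂μ := by
      rw [← integral_const_mul, ← integral_add hdevi (hgi.const_mul q)]
      congr with x; ring
    rw [this]; ring
  have hfar : |∫ x, g x * (φ x - q) ∂μ| ≤ a * ε + a * b * μ.real E :=
    abs_integral_le_add_measureReal hE (mul_nonneg ha hε) hdev fun x hx => by
      rw [abs_mul]; exact mul_le_mul (hga x) (hφε x hx) (abs_nonneg _) ha
  calc |∫ x, g x * φ x ∂μ - p * q|
      ≤ |∫ x, g x * (φ x - q) ∂μ| + |q| * |∫ x, g x ∂μ - p| := by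
        rw [hsplit, ← abs_mul]; exact abs_add_le _ _
    _ ≤ |q| * |∫ x, g x ∂μ - p| + a * (ε + b * μ.real E) := by linarith
end Integrals

section LargeDeviations

variable {X : Type*} {d : ℕ} (f : X → X) (τ : X → EuclideanSpace ℝ (Fin d))
  (v : EuclideanSpace ℝ (Fin d)) (ε : ℝ)

def deviationSet (K : ℕ) : Set X :=
  {x | ε ≤ ‖(K : ℝ)⁻¹ • birkhoff f τ K x - v‖}

def largeDeviationSet {ι : Type*} (N : ι → ℕ) : Set X :=
  ⋃ i, ⋃ j, ⋃ (_ : N i < N j), f^[N i] ⁻¹' deviationSet f τ v ε (N j - N i)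

lemma le_sub_of_le_abs_sub {m a b : ℕ} (h : (m : ℤ) ≤ |(a : ℤ) - b|) (hab : a ≤ b) :
    m ≤ b - a := by
  rw [abs_sub_comm, abs_of_nonneg (by omega)] at h
  omega

lemma mul_sub_le_norm_of_norm_inv_smul_sub_le {E : Type*} [NormedAddCommGroup E]
    [NormedSpace ℝ E] {K r : ℝ} (hK : 0 < K) {v w : E} (h : ‖K⁻¹ • w - v‖ ≤ r) :
    K * (‖v‖ - r) ≤ ‖w‖ := by
  rw [← le_inv_mul_iff₀ hK]
  have := norm_sub_norm_le v (K⁻¹ • w)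
  rw [norm_sub_rev, norm_smul, Real.norm_of_nonneg (inv_nonneg.2 hK.le)] at this
  linarith

lemma sub_mul_le_norm_birkhoff_sub {ι : Type*} {N : ι → ℕ} {m : ℕ}
    (hgap : ∀ i j, i ≠ j → (m : ℤ) ≤ |(N i : ℤ) - N j|) (hε : ε ≤ ‖v‖) {x : X}
    (hx : x ∉ largeDeviationSet f τ v ε N) {i j : ι} (hij : i ≠ j) :
    (‖v‖ - ε) * m ≤ ‖birkhoff f τ (N i) x - birkhoff f τ (N j) x‖ := by
  wlog hle : N i ≤ N j generalizing i j
  · rw [norm_sub_rev]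
    exact this (Ne.symm hij) (le_of_not_ge hle)
  obtain ⟨K, hK⟩ := Nat.exists_eq_add_of_le hle
  have hmK : m ≤ K := by simpa [hK] using le_sub_of_le_abs_sub (hgap i j hij) hle
  rcases Nat.eq_zero_or_pos K with rfl | hKpos
  · simp [Nat.le_zero.1 hmK]
  have hnear : ‖(K : ℝ)⁻¹ • birkhoff f τ K (f^[N i] x) - v‖ ≤ ε := by
    refine le_of_not_ge fun hdev => hx ?_
    simp only [largeDeviationSet, Set.mem_iUnion, Set.mem_preimage]
    exact ⟨i, j, by omega, by simpa [hK, deviationSet] using hdev⟩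
  rw [hK, birkhoff_add, norm_sub_rev, add_sub_cancel_left]
  calc (‖v‖ - ε) * m ≤ (‖v‖ - ε) * K := by gcongr
    _ = K * (‖v‖ - ε) := mul_comm _ _
    _ ≤ _ := mul_sub_le_norm_of_norm_inv_smul_sub_le (by exact_mod_cast hKpos) hnear

variable [MeasurableSpace X]

lemma measurableSet_deviationSet (hf : Measurable f) (hτ : Measurable τ) (K : ℕ) :
    MeasurableSet (deviationSet f τ v ε K) :=
  measurableSet_le measurable_const
    (((measurable_birkhoff f τ hf hτ K).const_smul ((K : ℝ)⁻¹)).sub_const v).norm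

lemma measurableSet_largeDeviationSet (hf : Measurable f) (hτ : Measurable τ) {ι : Type*}
    [Countable ι] (N : ι → ℕ) : MeasurableSet (largeDeviationSet f τ v ε N) :=
  .iUnion fun _ => .iUnion fun _ => .iUnion fun _ =>
    (measurableSet_deviationSet f τ v ε hf hτ _).preimage (hf.iterate _)

lemma measureReal_largeDeviationSet_le {μ : Measure X} (hf : MeasurePreserving f μ μ)
    (hτ : Measurable τ) {ι : Type*} [Fintype ι] {N : ι → ℕ} {m : ℕ}
    (hgap : ∀ i j, i ≠ j → (m : ℤ) ≤ |(N i : ℤ) - N j|) {b : ℝ}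
    (hdev : ∀ K, 1 ≤ K → m ≤ K → μ.real (deviationSet f τ v ε K) ≤ b) :
    μ.real (largeDeviationSet f τ v ε N) ≤ Fintype.card ι ^ 2 * b := by
  have hb : 0 ≤ b :=
    measureReal_nonneg.trans (hdev (max m 1) (le_max_right _ _) (le_max_left _ _))
  have hpair : ∀ i j,
      μ.real (⋃ (_ : N i < N j), f^[N i] ⁻¹' deviationSet f τ v ε (N j - N i)) ≤ b := by
    intro i j
    by_cases hlt : N i < N j
    · have hij : i ≠ j := fun h => hlt.ne (congrArg N h)
      simp only [hlt, Set.iUnion_true, Measure.real]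
      rw [(hf.iterate _).measure_preimage
        (measurableSet_deviationSet f τ v ε hf.measurable hτ _).nullMeasurableSet]
      exact hdev _ (by omega) (le_sub_of_le_abs_sub (hgap i j hij) hlt.le)
    · simpa [hlt] using hb
  calc μ.real (largeDeviationSet f τ v ε N)
      ≤ ∑ i, ∑ j, μ.real (⋃ (_ : N i < N j), f^[N i] ⁻¹' deviationSet f τ v ε (N j - N i)) :=
        (measureReal_iUnion_fintype_le _).trans
          (sum_le_sum fun i _ => measureReal_iUnion_fintype_le _)
    _ ≤ ∑ _i : ι, ∑ _j : ι, b := sum_le_sum fun i _ => sum_le_sum fun j _ => hpair i j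
    _ = Fintype.card ι ^ 2 * b := by simp [sq, mul_assoc]

end LargeDeviations

section ActionCorrelation

variable {X Y T ι : Type*} [MeasurableSpace X] [MeasurableSpace Y] [Fintype ι]

def actionCorrelation (ν : Measure Y) (G : T → Y → Y) (B : ι → Y → ℝ) (t : ι → T) : ℝ :=
  ∫ y, ∏ j, B j (G (t j) y) ∂ν

lemma abs_prod_integral_le {ν : Measure Y} [IsProbabilityMeasure ν] {B : ι → Y → ℝ}
    {b : ι → ℝ} (hb : ∀ j y, |B j y| ≤ b j) : |∏ j, ∫ y, B j y ∂ν| ≤ ∏ j, b j := by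
  rw [abs_prod]
  exact prod_le_prod (fun _ _ => abs_nonneg _) fun j _ => abs_integral_le_of_abs_le (hb j)

lemma abs_actionCorrelation_sub_le {ν : Measure Y} [IsProbabilityMeasure ν] {G : T → Y → Y}
    {B : ι → Y → ℝ} {b : ι → ℝ} (hb : ∀ j y, |B j y| ≤ b j) (t : ι → T) :
    |actionCorrelation ν G B t - ∏ j, ∫ y, B j y ∂ν| ≤ 2 * ∏ j, b j :=
  calc _ ≤ |actionCorrelation ν G B t| + |∏ j, ∫ y, B j y ∂ν| := abs_sub _ _
    _ ≤ ∏ j, b j + ∏ j, b j :=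
      add_le_add (abs_integral_le_of_abs_le fun y => abs_prod_le_prod_of_abs_le hb _)
        (abs_prod_integral_le hb)
    _ = 2 * ∏ j, b j := by ring

variable [MeasurableSpace T] {G : T → Y → Y} {B : ι → Y → ℝ}

lemma measurable_prod_comp_action (hG : Measurable fun q : T × Y => G q.1 q.2)
    (hB : ∀ j, Measurable (B j)) {t : X → ι → T} (ht : ∀ j, Measurable fun x => t x j) :
    Measurable fun q : X × Y => ∏ j, B j (G (t q.1 j) q.2) :=
  Finset.measurable_prod _ fun j _ =>
    (hB j).comp (hG.comp (((ht j).comp measurable_fst).prodMk measurable_snd))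

lemma stronglyMeasurable_actionCorrelation (ν : Measure Y) [SFinite ν]
    (hG : Measurable fun q : T × Y => G q.1 q.2) (hB : ∀ j, Measurable (B j))
    {t : X → ι → T} (ht : ∀ j, Measurable fun x => t x j) :
    StronglyMeasurable fun x => actionCorrelation ν G B (t x) :=
  (measurable_prod_comp_action hG hB ht).stronglyMeasurable.integral_prod_right'

end ActionCorrelation

lemma abs_actionCorrelation_birkhoff_sub_le {X Y ι : Type*} [MeasurableSpace Y] [Fintype ι]
    {d : ℕ} {f : X → X} {τ : X → EuclideanSpace ℝ (Fin d)} {v : EuclideanSpace ℝ (Fin d)} {ε : ℝ}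
    (hε : ε ≤ ‖v‖)
    {ν : Measure Y} {G : EuclideanSpace ℝ (Fin d) → Y → Y} {B : ι → Y → ℝ} {CG κ : ℝ}
    (hGmix : ∀ t : ι → EuclideanSpace ℝ (Fin d), ∀ m : ℝ, 0 ≤ m →
      (∀ i j, i ≠ j → m ≤ ‖t i - t j‖) →
      |actionCorrelation ν G B t - ∏ j, ∫ y, B j y ∂ν| ≤ CG * Real.exp (-κ * m))
    {N : ι → ℕ} {m : ℕ} (hgap : ∀ i j, i ≠ j → (m : ℤ) ≤ |(N i : ℤ) - N j|) {x : X}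
    (hx : x ∉ largeDeviationSet f τ v ε N) :
    |actionCorrelation ν G B (fun j => birkhoff f τ (N j) x) - ∏ j, ∫ y, B j y ∂ν|
      ≤ CG * Real.exp (-(κ * (‖v‖ - ε)) * m) := by
  have := hGmix _ _ (mul_nonneg (sub_nonneg.2 hε) m.cast_nonneg)
    fun i j hij => sub_mul_le_norm_birkhoff_sub f τ v ε hgap hε hx hij
  simpa only [neg_mul, mul_assoc] using this

section SkewProduct

variable {X Y ι : Type*} [MeasurableSpace X] [MeasurableSpace Y] [Fintype ι] {d : ℕ}
  {μ : Measure X} {ν : Measure Y} [IsFiniteMeasure μ] [IsFiniteMeasure ν]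
  {f : X → X} {G : EuclideanSpace ℝ (Fin d) → Y → Y} {τ : X → EuclideanSpace ℝ (Fin d)}
  {A : ι → X → ℝ} {B : ι → Y → ℝ}

lemma integral_prod_skew_iterate (hf : Measurable f) (hτ : Measurable τ)
    (hGmeas : Measurable fun q : EuclideanSpace ℝ (Fin d) × Y => G q.1 q.2)
    (hG0 : G 0 = id) (hGadd : ∀ t s, G (t + s) = G t ∘ G s)
    (hA : ∀ j, Measurable (A j)) (hB : ∀ j, Measurable (B j)) {a b : ι → ℝ}
    (ha : ∀ j x, |A j x| ≤ a j) (hb : ∀ j y, |B j y| ≤ b j) (N : ι → ℕ) :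
    ∫ q, ∏ j, (A j ((skew f G τ)^[N j] q).1 * B j ((skew f G τ)^[N j] q).2) ∂(μ.prod ν)
      = ∫ x, (∏ j, A j (f^[N j] x)) *
          actionCorrelation ν G B (fun j => birkhoff f τ (N j) x) ∂μ := by
  have hg : Measurable fun x => ∏ j, A j (f^[N j] x) :=
    Finset.measurable_prod _ fun j _ => (hA j).comp (hf.iterate _)
  have hH := measurable_prod_comp_action hGmeas hB fun j => measurable_birkhoff f τ hf hτ (N j)
  have hint : Integrable (fun q : X × Y =>
      (∏ j, A j (f^[N j] q.1)) * ∏ j, B j (G (birkhoff f τ (N j) q.1) q.2)) (μ.prod ν) := by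
    refine .of_bound ((hg.comp measurable_fst).mul hH).aestronglyMeasurable
      ((∏ j, a j) * ∏ j, b j) (ae_of_all _ fun q => ?_)
    rw [Real.norm_eq_abs, abs_mul]
    exact mul_le_mul (abs_prod_le_prod_of_abs_le ha _) (abs_prod_le_prod_of_abs_le hb _)
      (abs_nonneg _) (prod_nonneg fun j _ => (abs_nonneg _).trans (ha j q.1))
  simp_rw [skew_iterate f τ G hG0 hGadd, prod_mul_distrib]
  rw [integral_prod _ hint]
  simp_rw [integral_const_mul]
  rfl

end SkewProduct

theorem stmt_9_general
    {X Y : Type*} [MeasurableSpace X] [MeasurableSpace Y]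
    (μ : Measure X) (ν : Measure Y)
    [IsProbabilityMeasure μ] [IsProbabilityMeasure ν]
    {d : ℕ}
    (f : X → X) (hf : MeasurePreserving f μ μ)
    (G : EuclideanSpace ℝ (Fin d) → Y → Y)
    (hGmeas : Measurable fun q : EuclideanSpace ℝ (Fin d) × Y => G q.1 q.2)
    (hG0 : G 0 = id)
    (hGadd : ∀ t s, G (t + s) = G t ∘ G s)
    (τ : X → EuclideanSpace ℝ (Fin d)) (hτmeas : Measurable τ)
    (s : ℕ)
    (hdrift : (∫ x, τ x ∂μ) ≠ 0)
    -- exponential large deviation bounds for τ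
    (hLD : ∀ ε : ℝ, 0 < ε → ∃ C : ℝ, 0 < C ∧ ∃ δ : ℝ, 0 < δ ∧ ∀ N : ℕ, 1 ≤ N →
      (μ {x | ε ≤ ‖(N : ℝ)⁻¹ • birkhoff f τ N x - ∫ x, τ x ∂μ‖}).toReal
        ≤ C * Real.exp (-δ * N))
    (A : Fin s → X → ℝ) (hAm : ∀ j, Measurable (A j))
    (hAb : ∀ j, ∃ M, ∀ x, |A j x| ≤ M)
    (B : Fin s → Y → ℝ) (hBm : ∀ j, Measurable (B j))
    (hBb : ∀ j, ∃ M, ∀ y, |B j y| ≤ M)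
    (Cf cf CG κ : ℝ) (hcf : 0 < cf) (hCG : 0 < CG) (hκ : 0 < κ)
    -- exponential mixing of order s of f
    (hfmix : ∀ N : Fin s → ℕ, (∀ i j : Fin s, i ≤ j → N i ≤ N j) →
      ∀ m : ℕ, (∀ i j : Fin s, i ≠ j → (m : ℤ) ≤ |(N i : ℤ) - (N j : ℤ)|) →
      |(∫ x, ∏ j, A j (f^[N j] x) ∂μ) - ∏ j, ∫ x, A j x ∂μ|
        ≤ Cf * Real.exp (-cf * m))
    -- exponential mixing of order s of G
    (hGmix : ∀ t : Fin s → EuclideanSpace ℝ (Fin d), ∀ m : ℝ, 0 ≤ m →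
      (∀ i j : Fin s, i ≠ j → m ≤ ‖t i - t j‖) →
      |(∫ y, ∏ j, B j (G (t j) y) ∂ν) - ∏ j, ∫ y, B j y ∂ν|
        ≤ CG * Real.exp (-κ * m)) :
    ∃ C' : ℝ, 0 < C' ∧ ∃ c' : ℝ, 0 < c' ∧
      ∀ N : Fin s → ℕ, (∀ i j : Fin s, i ≤ j → N i ≤ N j) →
      ∀ m : ℕ, (∀ i j : Fin s, i ≠ j → (m : ℤ) ≤ |(N i : ℤ) - (N j : ℤ)|) →
        |(∫ q, ∏ j, (A j ((skew f G τ)^[N j] q).1 * B j ((skew f G τ)^[N j] q).2)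
            ∂(μ.prod ν))
          - ∏ j, ∫ q, A j q.1 * B j q.2 ∂(μ.prod ν)|
          ≤ C' * Real.exp (-c' * m) := by
  obtain ⟨x₀⟩ := nonempty_of_isProbabilityMeasure μ
  obtain ⟨y₀⟩ := nonempty_of_isProbabilityMeasure ν
  choose a ha using hAb
  choose b hb using hBb
  have hMA : 0 ≤ ∏ j, a j := prod_nonneg fun j _ => (abs_nonneg _).trans (ha j x₀)
  have hMB : 0 ≤ ∏ j, b j := prod_nonneg fun j _ => (abs_nonneg _).trans (hb j y₀)
  set v := ∫ x, τ x ∂μ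
  have hv : 0 < ‖v‖ - ‖v‖ / 2 := by linarith [norm_pos_iff.2 hdrift]
  obtain ⟨C, hC, δ, hδ, hdev⟩ := hLD (‖v‖ / 2) (by linarith)
  obtain ⟨C', hC', c', hc', hdecay⟩ : ExpDecay fun m => (∏ j, b j) * (Cf * Real.exp (-cf * m))
      + (∏ j, a j) * (CG * Real.exp (-(κ * (‖v‖ - ‖v‖ / 2)) * m)
        + 2 * (∏ j, b j) * (s ^ 2 * (C * Real.exp (-δ * m)))) :=
    ((ExpDecay.exp hcf).const_mul hMB).add (((ExpDecay.exp (mul_pos hκ hv)).add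
      (((ExpDecay.exp hδ).const_mul (by positivity)).const_mul (by positivity))).const_mul hMA)
  refine ⟨C', hC', c', hc', fun N hN m hm => le_trans ?_ (hdecay m)⟩
  rw [integral_prod_skew_iterate hf.measurable hτmeas hGmeas hG0 hGadd hAm hBm ha hb,
    prod_congr rfl fun j _ => integral_prod_mul (A j) (B j), prod_mul_distrib]
  refine (abs_integral_mul_sub_mul_le
    (Finset.measurable_prod _ fun j _ =>
      (hAm j).comp (hf.measurable.iterate _)).aestronglyMeasurable
    (stronglyMeasurable_actionCorrelation ν hGmeas hBm
      fun j => measurable_birkhoff f τ hf.measurable hτmeas (N j)).aestronglyMeasurable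
    (measurableSet_largeDeviationSet f τ v (‖v‖ / 2) hf.measurable hτmeas N) (by positivity)
    (fun _ => abs_prod_le_prod_of_abs_le ha _) (fun _ => abs_actionCorrelation_sub_le hb _)
    fun x hx => abs_actionCorrelation_birkhoff_sub_le (by linarith) hGmix hm hx).trans ?_
  beta_reduce
  gcongr
  · exact abs_prod_integral_le hb
  · exact hfmix N hN m hm
  · simpa using measureReal_largeDeviationSet_le f τ v _ hf hτmeas hm
      (b := C * Real.exp (-δ * m)) fun K hK hmK => (hdev K hK).trans (by
        gcongr C * Real.exp ?_
        rw [neg_mul, neg_mul, neg_le_neg_iff]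
        gcongr)

/-- Theorem 4.12 of the paper: nonzero drift, exponential large deviation bounds for `τ`,
and exponential mixing of order `s` for `f` and `G` imply exponential mixing of order `s`
for the skew product `F` (the rate being exponential in `min_{i≠j}|N_i - N_j|`). -/
theorem stmt_9
    {X Y : Type*} [MeasurableSpace X] [MeasurableSpace Y]
    (μ : Measure X) (ν : Measure Y)
    [IsProbabilityMeasure μ] [IsProbabilityMeasure ν]
    {d : ℕ}
    (f : X → X) (hf : MeasurePreserving f μ μ)
    (G : EuclideanSpace ℝ (Fin d) → Y → Y)
    (hGmeas : Measurable fun q : EuclideanSpace ℝ (Fin d) × Y => G q.1 q.2)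
    (hG0 : G 0 = id)
    (hGadd : ∀ t s, G (t + s) = G t ∘ G s)
    (hGpres : ∀ t, MeasurePreserving (G t) ν ν)
    (τ : X → EuclideanSpace ℝ (Fin d)) (hτmeas : Measurable τ)
    (hτbdd : ∃ M, ∀ x, ‖τ x‖ ≤ M)
    (s : ℕ) (hs : 2 ≤ s)
    (hdrift : (∫ x, τ x ∂μ) ≠ 0)
    -- exponential large deviation bounds for τ
    (hLD : ∀ ε : ℝ, 0 < ε → ∃ C : ℝ, 0 < C ∧ ∃ δ : ℝ, 0 < δ ∧ ∀ N : ℕ, 1 ≤ N →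
      (μ {x | ε ≤ ‖(N : ℝ)⁻¹ • birkhoff f τ N x - ∫ x, τ x ∂μ‖}).toReal
        ≤ C * Real.exp (-δ * N))
    (A : Fin s → X → ℝ) (hAm : ∀ j, Measurable (A j))
    (hAb : ∀ j, ∃ M, ∀ x, |A j x| ≤ M)
    (B : Fin s → Y → ℝ) (hBm : ∀ j, Measurable (B j))
    (hBb : ∀ j, ∃ M, ∀ y, |B j y| ≤ M)
    (Cf cf CG κ : ℝ) (hCf : 0 < Cf) (hcf : 0 < cf) (hCG : 0 < CG) (hκ : 0 < κ)
    -- exponential mixing of order s of f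
    (hfmix : ∀ N : Fin s → ℕ, (∀ i j : Fin s, i ≤ j → N i ≤ N j) →
      ∀ m : ℕ, (∀ i j : Fin s, i ≠ j → (m : ℤ) ≤ |(N i : ℤ) - (N j : ℤ)|) →
      |(∫ x, ∏ j, A j (f^[N j] x) ∂μ) - ∏ j, ∫ x, A j x ∂μ|
        ≤ Cf * Real.exp (-cf * m))
    -- exponential mixing of order s of G
    (hGmix : ∀ t : Fin s → EuclideanSpace ℝ (Fin d), ∀ m : ℝ, 0 ≤ m →
      (∀ i j : Fin s, i ≠ j → m ≤ ‖t i - t j‖) →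
      |(∫ y, ∏ j, B j (G (t j) y) ∂ν) - ∏ j, ∫ y, B j y ∂ν|
        ≤ CG * Real.exp (-κ * m)) :
    ∃ C' : ℝ, 0 < C' ∧ ∃ c' : ℝ, 0 < c' ∧
      ∀ N : Fin s → ℕ, (∀ i j : Fin s, i ≤ j → N i ≤ N j) →
      ∀ m : ℕ, (∀ i j : Fin s, i ≠ j → (m : ℤ) ≤ |(N i : ℤ) - (N j : ℤ)|) →
        |(∫ q, ∏ j, (A j ((skew f G τ)^[N j] q).1 * B j ((skew f G τ)^[N j] q).2)
            ∂(μ.prod ν))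
          - ∏ j, ∫ q, A j q.1 * B j q.2 ∂(μ.prod ν)|
          ≤ C' * Real.exp (-c' * m) :=
  stmt_9_general μ ν f hf G hGmeas hG0 hGadd τ hτmeas s hdrift hLD A hAm hAb B hBm hBb Cf cf CG κ
    hcf hCG hκ hfmix hGmix

end
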